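/- arXiv:2604.03484 — 6 statements merged into one kernel-verified Lean document; each statement's English description precedes it below -/
import Mathlib

section
/- Let A and B be n×k real matrices of rank k such that all k×k minors Δ_I(A) are nonnegative and all k×k minors Δ_I(B) are nonnegative (for I ranging over k-element subsets of {1,…,n}). Let V = col(A) and W = col(B). Then V ⊕ W^⊥ = ℝ^n if and only if there exists a k-element subset I with Δ_I(A) ≠ 0 and Δ_I(B) ≠ 0. -/
/-- The `k × k` minor of an `n × k` matrix `M` in the rows indexed by a `k`-element
subset `I` of `Fin n`. -/
noncomputable def minorRows {R : Type*} [CommRing R] {n k : ℕ} (M : Matrix (Fin n) (Fin k) R)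
    (I : Finset (Fin n)) (hI : I.card = k) : R :=
  (M.submatrix (fun a => ((I.orderIsoOfFin hI a : Fin n))) id).det

/-- The orthogonal complement of a subspace `W ⊆ R^n` with respect to the symmetric
bilinear form for which the standard basis is orthonormal. -/
def bperp {R : Type*} [CommRing R] {n : ℕ} (W : Submodule R (Fin n → R)) :
    Submodule R (Fin n → R) where
  carrier := {v | ∀ w ∈ W, ∑ i, v i * w i = 0}
  zero_mem' := by intro w hw; simp
  add_mem' := by
    intro a b ha hb w hw
    have ha' := ha w hw
    have hb' := hb w hw
    simp only [Pi.add_apply, add_mul, Finset.sum_add_distrib, ha', hb', add_zero]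
  smul_mem' := by
    intro c a ha w hw
    have ha' := ha w hw
    simp only [Pi.smul_apply, smul_eq_mul, mul_assoc, ← Finset.mul_sum, ha', mul_zero]


open Equiv Equiv.Perm Finset Function Matrix

variable {R : Type*} [CommRing R] {n k : ℕ}

local notation "ε" σ => ((Equiv.Perm.sign σ : ℤ) : R)

/-- Step 1: expansion of det (M * N) over all middle-index functions. -/
theorem cb_step1 (M : Matrix (Fin k) (Fin n) R) (N : Matrix (Fin n) (Fin k) R) :
    (M * N).det = ∑ p : Fin k → Fin n, ∑ σ : Equiv.Perm (Fin k),
      (ε σ) * ∏ x, M (σ x) (p x) * N (p x) x := by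
  simp only [Matrix.det_apply', Matrix.mul_apply, Finset.prod_univ_sum, Finset.mul_sum,
    Fintype.piFinset_univ]
  rw [Finset.sum_comm]

/-- Step 2: non-injective middle functions contribute zero. -/
theorem cb_step2 (M : Matrix (Fin k) (Fin n) R) (N : Matrix (Fin n) (Fin k) R)
    {p : Fin k → Fin n} (H : ¬Function.Injective p) :
    (∑ σ : Equiv.Perm (Fin k), (ε σ) * ∏ x, M (σ x) (p x) * N (p x) x) = 0 := by
  obtain ⟨i, j, hpij, hij⟩ : ∃ i j, p i = p j ∧ i ≠ j := by
    rw [Function.Injective] at H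
    push_neg at H
    obtain ⟨i, j, h1, h2⟩ := H
    exact ⟨i, j, h1, h2⟩
  exact Finset.sum_involution (fun σ _ => σ * Equiv.swap i j)
    (fun σ _ => by
      have : (∏ x, M (σ x) (p x)) = ∏ x, M ((σ * Equiv.swap i j) x) (p x) :=
        Fintype.prod_equiv (Equiv.swap i j) _ _ (by simp [Equiv.apply_swap_eq_self hpij])
      simp [this, Equiv.Perm.sign_swap hij, -Equiv.Perm.sign_swap', Finset.prod_mul_distrib])
    (fun σ _ _ => (not_congr Equiv.mul_swap_eq_iff).mpr hij) (fun _ _ => Finset.mem_univ _)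
    fun σ _ => Equiv.mul_swap_involutive i j σ

/-- Step 3: square case sum over permutations. -/
theorem cb_step3 (M : Matrix (Fin k) (Fin k) R) (N : Matrix (Fin k) (Fin k) R) :
    (M * N).det = ∑ τ : Equiv.Perm (Fin k), ∑ σ : Equiv.Perm (Fin k),
      (ε σ) * ∏ x, M (σ x) (τ x) * N (τ x) x := by
  rw [cb_step1]
  rw [← Finset.sum_filter_add_sum_filter_not Finset.univ Function.Injective]
  rw [show (∑ p ∈ Finset.univ.filter (fun p => ¬ Function.Injective p),
      ∑ σ : Equiv.Perm (Fin k), (ε σ) * ∏ x, M (σ x) (p x) * N (p x) x) = 0 from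
    Finset.sum_eq_zero (fun p hp => cb_step2 M N (Finset.mem_filter.mp hp).2), add_zero]
  refine Finset.sum_bij (fun p hp => Equiv.ofBijective p
    (Finite.injective_iff_bijective.mp (Finset.mem_filter.mp hp).2)) (fun _ _ => Finset.mem_univ _)
    (fun _ _ _ _ h => by injection h) (fun τ _ => ⟨τ, Finset.mem_filter.mpr
      ⟨Finset.mem_univ _, τ.injective⟩, Equiv.coe_fn_injective rfl⟩) (fun _ _ => rfl)

/-- The strictly increasing enumeration of a `k`-element subset, as a map `Fin k → Fin n`. -/
noncomputable def enumOf (I : Finset (Fin n)) (hI : I.card = k) : Fin k → Fin n :=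
  fun a => ((I.orderIsoOfFin hI a : Fin n))

theorem enumOf_injective (I : Finset (Fin n)) (hI : I.card = k) :
    Function.Injective (enumOf I hI) :=
  fun a b h => (I.orderIsoOfFin hI).injective (Subtype.ext h)

theorem range_enumOf (I : Finset (Fin n)) (hI : I.card = k) :
    Set.range (enumOf I hI) = (I : Set (Fin n)) := by
  have : enumOf I hI = I.orderEmbOfFin hI := by
    funext a; exact I.coe_orderIsoOfFin_apply hI a
  rw [this, Finset.range_orderEmbOfFin]

theorem cardProof {I : Finset (Fin n)} (h : I ∈ Finset.univ.powersetCard k) : I.card = k :=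
  (Finset.mem_powersetCard.mp h).2

theorem cb_reindex (F : (Fin k → Fin n) → R) :
    ∑ p ∈ Finset.univ.filter (fun p : Fin k → Fin n => Function.Injective p), F p
      = ∑ I ∈ (Finset.univ.powersetCard k : Finset (Finset (Fin n))).attach,
          ∑ τ : Equiv.Perm (Fin k), F (enumOf I.1 (cardProof I.2) ∘ τ) := by
  rw [← Finset.sum_product']
  refine (Finset.sum_bij (fun z _ => enumOf z.1.1 (cardProof z.1.2) ∘ z.2) ?_ ?_ ?_ ?_).symm
  · intro z _
    exact Finset.mem_filter.mpr ⟨Finset.mem_univ _,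
      (enumOf_injective _ _).comp z.2.injective⟩
  · rintro ⟨⟨s, hs⟩, τ⟩ _ ⟨⟨s', hs'⟩, τ'⟩ _ h
    have hss : s = s' := by
      have h1 := congrArg Set.range h
      rw [Set.range_comp, Set.range_comp] at h1
      simp only [Equiv.range_eq_univ, Set.image_univ] at h1
      rw [range_enumOf, range_enumOf] at h1
      exact_mod_cast h1
    subst hss
    have hττ : τ = τ' := by
      refine Equiv.ext fun a => ?_
      exact enumOf_injective s (cardProof hs) (congrFun h a)
    rw [hττ]
  · intro p hp
    have hpinj : Function.Injective p := (Finset.mem_filter.mp hp).2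
    have himg : Finset.image p Finset.univ ∈ Finset.univ.powersetCard k :=
      Finset.mem_powersetCard.mpr ⟨Finset.subset_univ _, by
        rw [Finset.card_image_of_injective _ hpinj, Finset.card_univ, Fintype.card_fin]⟩
    set I : Finset (Fin n) := Finset.image p Finset.univ with hIdef
    set e := I.orderIsoOfFin (cardProof himg) with hedef
    have hmem : ∀ a, p a ∈ I := fun a => Finset.mem_image_of_mem p (Finset.mem_univ a)
    have htinj : Function.Injective (fun a => e.symm ⟨p a, hmem a⟩) := by
      intro a b h
      exact hpinj (congrArg Subtype.val (e.symm.injective.eq_iff.mp h) : p a = p b)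
    refine ⟨(⟨⟨I, himg⟩, Equiv.ofBijective _ (Finite.injective_iff_bijective.mp htinj)⟩),
      Finset.mem_product.mpr ⟨Finset.mem_attach _ _, Finset.mem_univ _⟩, ?_⟩
    funext a
    show enumOf I (cardProof himg) (e.symm ⟨p a, hmem a⟩) = p a
    unfold enumOf
    rw [show I.orderIsoOfFin (cardProof himg) = e from rfl, e.apply_symm_apply]
  · intro z _
    rfl

/-- Cauchy–Binet. -/
theorem cauchyBinet (M : Matrix (Fin k) (Fin n) R) (N : Matrix (Fin n) (Fin k) R) :
    (M * N).det = ∑ I ∈ (Finset.univ.powersetCard k : Finset (Finset (Fin n))).attach,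
      (M.submatrix id (enumOf I.1 (cardProof I.2))).det *
        (N.submatrix (enumOf I.1 (cardProof I.2)) id).det := by
  rw [cb_step1, ← Finset.sum_filter_add_sum_filter_not Finset.univ Function.Injective,
    show (∑ p ∈ Finset.univ.filter (fun p => ¬ Function.Injective p),
      ∑ σ : Equiv.Perm (Fin k), ((Equiv.Perm.sign σ : ℤ) : R) * ∏ x, M (σ x) (p x) * N (p x) x) = 0
      from Finset.sum_eq_zero (fun p hp => cb_step2 M N (Finset.mem_filter.mp hp).2), add_zero,
    cb_reindex]
  refine Finset.sum_congr rfl fun I _ => ?_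
  rw [← Matrix.det_mul, cb_step3]
  rfl


theorem bperp_eq_ker' {n k : ℕ} (B : Matrix (Fin n) (Fin k) ℝ)
    (bp : Submodule ℝ (Fin n → ℝ))
    (hbp : ∀ v, v ∈ bp ↔ ∀ w ∈ LinearMap.range (Matrix.toLin' B), ∑ i, v i * w i = 0) :
    bp = LinearMap.ker (Matrix.toLin' Bᵀ) := by
  ext v
  rw [hbp, LinearMap.mem_ker, Matrix.toLin'_apply]
  constructor
  · intro hv
    funext j
    have h := hv (Matrix.toLin' B (Pi.single j 1)) (LinearMap.mem_range_self _ _)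
    rw [Matrix.toLin'_apply] at h
    have e1 : ∑ i, v i * (B *ᵥ (Pi.single j 1)) i = (Bᵀ *ᵥ v) j := by
      rw [Matrix.mulVec_transpose]
      show v ⬝ᵥ (B *ᵥ Pi.single j 1) = (v ᵥ* B) j
      rw [Matrix.dotProduct_mulVec, dotProduct_single, mul_one]
    rw [e1] at h
    simpa using h
  · rintro hv w ⟨y, rfl⟩
    rw [Matrix.toLin'_apply]
    show v ⬝ᵥ (B *ᵥ y) = 0
    rw [Matrix.dotProduct_mulVec, ← Matrix.mulVec_transpose, hv]
    exact zero_dotProduct y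

theorem compl_iff_det {n k : ℕ} (A B : Matrix (Fin n) (Fin k) ℝ) (hA : A.rank = k)
    (hB : B.rank = k) :
    IsCompl (LinearMap.range (Matrix.toLin' A)) (LinearMap.ker (Matrix.toLin' Bᵀ)) ↔
      (Bᵀ * A).det ≠ 0 := by
  have hkn : k ≤ n := by
    rw [← hA]
    exact (Matrix.rank_le_card_height A).trans (by simp)
  have hVrank : Module.finrank ℝ (LinearMap.range (Matrix.toLin' A)) = k := by
    rw [Matrix.toLin'_apply']; exact hA
  have hrangeT : Module.finrank ℝ (LinearMap.range (Matrix.toLin' Bᵀ)) = k := by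
    rw [Matrix.toLin'_apply']
    show Bᵀ.rank = k
    rw [Matrix.rank_transpose]; exact hB
  have hKrank : Module.finrank ℝ (LinearMap.ker (Matrix.toLin' Bᵀ)) = n - k := by
    have h := LinearMap.finrank_range_add_finrank_ker (Matrix.toLin' Bᵀ)
    rw [hrangeT] at h
    have : Module.finrank ℝ (Fin n → ℝ) = n := by simp
    omega
  have hAinj : Function.Injective (Matrix.toLin' A) := by
    rw [← LinearMap.ker_eq_bot]
    rw [← Submodule.finrank_eq_zero (R := ℝ)]
    have h := LinearMap.finrank_range_add_finrank_ker (Matrix.toLin' A)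
    rw [hVrank] at h
    have : Module.finrank ℝ (Fin k → ℝ) = k := by simp
    omega
  constructor
  · intro hc hdet
    obtain ⟨x, hx0, hx⟩ := Matrix.exists_mulVec_eq_zero_iff.mpr hdet
    have hv : Matrix.toLin' A x ∈ LinearMap.range (Matrix.toLin' A) ⊓
        LinearMap.ker (Matrix.toLin' Bᵀ) := by
      refine ⟨LinearMap.mem_range_self _ _, ?_⟩
      show Matrix.toLin' Bᵀ (Matrix.toLin' A x) = 0
      rw [Matrix.toLin'_apply, Matrix.toLin'_apply, Matrix.mulVec_mulVec, hx]
    rw [hc.inf_eq_bot, Submodule.mem_bot] at hv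
    exact hx0 (by simpa using hAinj (by simpa using hv : Matrix.toLin' A x = Matrix.toLin' A 0))
  · intro hdet
    have hdisj : Disjoint (LinearMap.range (Matrix.toLin' A))
        (LinearMap.ker (Matrix.toLin' Bᵀ)) := by
      rw [Submodule.disjoint_def]
      rintro v ⟨x, rfl⟩ hker
      rw [LinearMap.mem_ker, Matrix.toLin'_apply, Matrix.toLin'_apply,
        Matrix.mulVec_mulVec] at hker
      have hx : x = 0 := by
        by_contra hx0
        exact hdet (Matrix.exists_mulVec_eq_zero_iff.mp ⟨x, hx0, hker⟩)
      rw [hx, map_zero]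
    refine ⟨hdisj, ?_⟩
    rw [codisjoint_iff]
    apply Submodule.eq_top_of_finrank_eq
    have h := Submodule.finrank_sup_add_finrank_inf_eq (LinearMap.range (Matrix.toLin' A))
      (LinearMap.ker (Matrix.toLin' Bᵀ))
    rw [hVrank, hKrank, disjoint_iff.mp hdisj] at h
    have h2 : Module.finrank ℝ (Fin n → ℝ) = n := by simp
    have h3 : Module.finrank ℝ (⊥ : Submodule ℝ (Fin n → ℝ)) = 0 := by simp
    have h4 := Submodule.finrank_le (LinearMap.range (Matrix.toLin' A) ⊔
      LinearMap.ker (Matrix.toLin' Bᵀ))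
    omega


/-- For totally nonnegative `n×k` real matrices `A, B` of rank `k`,
with `V = col(A)` and `W = col(B)`, `V ⊕ W^⊥ = ℝ^n` iff the positroids of `A` and `B`
intersect, i.e. some `k×k` minor is nonzero for both. -/
theorem stmt4 (n k : ℕ) (A B : Matrix (Fin n) (Fin k) ℝ) (hA : A.rank = k) (hB : B.rank = k)
    (hAnn : ∀ (I : Finset (Fin n)) (hI : I.card = k), 0 ≤ minorRows A I hI)
    (hBnn : ∀ (I : Finset (Fin n)) (hI : I.card = k), 0 ≤ minorRows B I hI) :
    IsCompl (LinearMap.range (Matrix.toLin' A)) (bperp (LinearMap.range (Matrix.toLin' B))) ↔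
      ∃ (I : Finset (Fin n)) (hI : I.card = k), minorRows A I hI ≠ 0 ∧ minorRows B I hI ≠ 0 := by
  
  have hterm : ∀ (I : Finset (Fin n)) (hI : I.card = k),
      ((Bᵀ).submatrix id (enumOf I hI)).det * (A.submatrix (enumOf I hI) id).det
        = minorRows B I hI * minorRows A I hI := by
    intro I hI
    rw [← Matrix.transpose_submatrix, Matrix.det_transpose]
    rfl
  rw [bperp_eq_ker' B (bperp (LinearMap.range (Matrix.toLin' B))) (fun v => Iff.rfl), compl_iff_det A B hA hB, cauchyBinet]
  constructor
  · intro hsum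
    obtain ⟨I, _, hne⟩ : ∃ I ∈ (Finset.univ.powersetCard k : Finset (Finset (Fin n))).attach,
        ((Bᵀ).submatrix id (enumOf I.1 (cardProof I.2))).det *
          (A.submatrix (enumOf I.1 (cardProof I.2)) id).det ≠ 0 := by
      by_contra h
      push_neg at h
      exact hsum (Finset.sum_eq_zero h)
    rw [hterm I.1 (cardProof I.2)] at hne
    exact ⟨I.1, cardProof I.2, (mul_ne_zero_iff.mp hne).2, (mul_ne_zero_iff.mp hne).1⟩
  · rintro ⟨I, hI, hA0, hB0⟩
    have hmem : I ∈ (Finset.univ.powersetCard k : Finset (Finset (Fin n))) :=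
      Finset.mem_powersetCard.mpr ⟨Finset.subset_univ _, hI⟩
    refine ne_of_gt (Finset.sum_pos' ?_ ⟨⟨I, hmem⟩, Finset.mem_attach _ _, ?_⟩)
    · intro J _
      rw [hterm J.1 (cardProof J.2)]
      exact mul_nonneg (hBnn _ _) (hAnn _ _)
    · rw [hterm I (cardProof hmem)]
      exact mul_pos ((hBnn I (cardProof hmem)).lt_of_ne
        (Ne.symm (by simpa using hB0))) ((hAnn I (cardProof hmem)).lt_of_ne
        (Ne.symm (by simpa using hA0)))
end

section
/- An n×n complex matrix g admits a factorization g = L·U with L lower triangular and U upper triangular (both invertible) if and only if all leading principal minors of g are nonzero, where the k-th leading principal minor is the determinant of the top-left k×k submatrix. -/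
open Matrix

private lemma submatrix_mul_tri {n k : ℕ} (hk : k ≤ n)
    (L U : Matrix (Fin n) (Fin n) ℂ) (hL : ∀ i j : Fin n, i < j → L i j = 0) :
    (L * U).submatrix (Fin.castLE hk) (Fin.castLE hk)
      = L.submatrix (Fin.castLE hk) (Fin.castLE hk)
          * U.submatrix (Fin.castLE hk) (Fin.castLE hk) := by
  ext i j
  simp only [Matrix.submatrix_apply, Matrix.mul_apply]
  calc ∑ m : Fin n, L (Fin.castLE hk i) m * U m (Fin.castLE hk j)
      = ∑ m ∈ Finset.univ.map ⟨Fin.castLE hk, Fin.castLE_injective hk⟩,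
          L (Fin.castLE hk i) m * U m (Fin.castLE hk j) := by
        refine (Finset.sum_subset (Finset.subset_univ _) ?_).symm
        intro m _ hm
        have hkm : k ≤ m.val := by
          by_contra h
          exact hm (Finset.mem_map.2 ⟨⟨m.val, Nat.lt_of_not_le h⟩, Finset.mem_univ _, by
            simp [Fin.ext_iff]⟩)
        have : Fin.castLE hk i < m := by
          simp only [Fin.lt_def, Fin.coe_castLE]
          exact lt_of_lt_of_le i.isLt hkm
        rw [hL _ _ this, zero_mul]
    _ = ∑ m : Fin k, L (Fin.castLE hk i) (Fin.castLE hk m)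
          * U (Fin.castLE hk m) (Fin.castLE hk j) := by
        rw [Finset.sum_map]
        simp

private lemma lu_exists : ∀ (n : ℕ) (g : Matrix (Fin n) (Fin n) ℂ),
    (∀ (k : ℕ) (hk : k ≤ n),
        (g.submatrix (Fin.castLE hk) (Fin.castLE hk)).det ≠ 0) →
    ∃ L U : Matrix (Fin n) (Fin n) ℂ, IsUnit L.det ∧ IsUnit U.det ∧
        (∀ i j : Fin n, i < j → L i j = 0) ∧ (∀ i j : Fin n, j < i → U i j = 0) ∧
        g = L * U := by
  intro n
  induction n with
  | zero =>
    intro g _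
    refine ⟨1, 1, by simp, by simp, fun i => i.elim0, fun i => i.elim0, ?_⟩
    ext i j; exact i.elim0
  | succ n ih =>
    intro g hg
    have hcs : ∀ a : Fin n, finSumFinEquiv.symm a.castSucc = Sum.inl a :=
      fun a => finSumFinEquiv_symm_apply_castAdd a
    set A : Matrix (Fin n) (Fin n) ℂ := g.submatrix Fin.castSucc Fin.castSucc with hA
    have hAminors : ∀ (k : ℕ) (hk : k ≤ n),
        (A.submatrix (Fin.castLE hk) (Fin.castLE hk)).det ≠ 0 := by
      intro k hk
      have : A.submatrix (Fin.castLE hk) (Fin.castLE hk)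
          = g.submatrix (Fin.castLE (hk.trans (Nat.le_succ n)))
              (Fin.castLE (hk.trans (Nat.le_succ n))) := by
        ext i j; rfl
      rw [this]
      exact hg k (hk.trans (Nat.le_succ n))
    obtain ⟨L₀, U₀, hLdet, hUdet, hLtri, hUtri, hAeq⟩ := ih A hAminors
    set b : Matrix (Fin n) (Fin 1) ℂ := Matrix.of fun i _ => g i.castSucc (Fin.last n) with hb
    set c : Matrix (Fin 1) (Fin n) ℂ := Matrix.of fun _ j => g (Fin.last n) j.castSucc with hc
    set d : Matrix (Fin 1) (Fin 1) ℂ := Matrix.of fun _ _ => g (Fin.last n) (Fin.last n) with hd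
    set y : Matrix (Fin n) (Fin 1) ℂ := L₀⁻¹ * b with hy
    set x : Matrix (Fin 1) (Fin n) ℂ := c * U₀⁻¹ with hx
    set s : Matrix (Fin 1) (Fin 1) ℂ := d - x * y with hs
    set Lb : Matrix (Fin n ⊕ Fin 1) (Fin n ⊕ Fin 1) ℂ := Matrix.fromBlocks L₀ 0 x 1 with hLb
    set Ub : Matrix (Fin n ⊕ Fin 1) (Fin n ⊕ Fin 1) ℂ := Matrix.fromBlocks U₀ y 0 s with hUb
    set L : Matrix (Fin (n+1)) (Fin (n+1)) ℂ :=
      Lb.submatrix finSumFinEquiv.symm finSumFinEquiv.symm with hL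
    set U : Matrix (Fin (n+1)) (Fin (n+1)) ℂ :=
      Ub.submatrix finSumFinEquiv.symm finSumFinEquiv.symm with hU
    have hprod : Lb * Ub = Matrix.fromBlocks A b c d := by
      rw [hLb, hUb, Matrix.fromBlocks_multiply, hAeq, hs, hx, hy]
      simp [Matrix.mul_nonsing_inv_cancel_left _ _ hLdet,
        Matrix.nonsing_inv_mul_cancel_right _ _ hUdet, Matrix.mul_assoc, add_sub_cancel]
    have hgLU : g = L * U := by
      rw [hL, hU, Matrix.submatrix_mul_equiv, hprod]
      ext i j
      refine Fin.lastCases ?_ (fun a => ?_) i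
      · refine Fin.lastCases ?_ (fun bb => ?_) j
        · simp [Matrix.submatrix_apply, finSumFinEquiv_symm_last, hd]
        · simp [Matrix.submatrix_apply, finSumFinEquiv_symm_last, hcs, hc]
      · refine Fin.lastCases ?_ (fun bb => ?_) j
        · simp [Matrix.submatrix_apply, finSumFinEquiv_symm_last, hcs, hb]
        · simp [Matrix.submatrix_apply, hcs, hA]
    have hLtri' : ∀ i j : Fin (n+1), i < j → L i j = 0 := by
      intro i j
      rw [hL]
      refine Fin.lastCases ?_ (fun a => ?_) i
      · intro hij
        exact absurd hij (Fin.le_last j).not_gt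
      · refine Fin.lastCases ?_ (fun bb => ?_) j
        · intro _
          simp [Matrix.submatrix_apply, finSumFinEquiv_symm_last, hcs, hLb]
        · intro hij
          have hab : a < bb := by simpa using hij
          simp [Matrix.submatrix_apply, hcs, hLb, hLtri a bb hab]
    have hUtri' : ∀ i j : Fin (n+1), j < i → U i j = 0 := by
      intro i j
      rw [hU]
      refine Fin.lastCases ?_ (fun a => ?_) i
      · refine Fin.lastCases ?_ (fun bb => ?_) j
        · intro hij
          exact absurd hij (lt_irrefl _)
        · intro _
          simp [Matrix.submatrix_apply, finSumFinEquiv_symm_last, hcs, hUb]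
      · refine Fin.lastCases ?_ (fun bb => ?_) j
        · intro hij
          exact absurd hij (Fin.le_last _).not_gt
        · intro hij
          have hab : bb < a := by simpa using hij
          simp [Matrix.submatrix_apply, hcs, hUb, hUtri a bb hab]
    have hdetL : L.det = L₀.det := by
      rw [hL, Matrix.det_submatrix_equiv_self, hLb, Matrix.det_fromBlocks_zero₁₂,
        Matrix.det_one, mul_one]
    have hdetU : U.det = U₀.det * s.det := by
      rw [hU, Matrix.det_submatrix_equiv_self, hUb, Matrix.det_fromBlocks_zero₂₁]
    have hdetg : g.det ≠ 0 := by
      have h := hg (n+1) le_rfl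
      have hgid : g.submatrix (Fin.castLE (le_refl (n+1))) (Fin.castLE (le_refl (n+1))) = g := by
        ext i j; rfl
      rwa [hgid] at h
    have hdetU_ne : U.det ≠ 0 := by
      intro h
      exact hdetg (by rw [hgLU, Matrix.det_mul, h, mul_zero])
    exact ⟨L, U, hdetL ▸ hLdet, isUnit_iff_ne_zero.mpr hdetU_ne, hLtri', hUtri', hgLU⟩

/-- An `n × n` complex matrix `g` factors as `g = L * U` with `L`
invertible lower triangular and `U` invertible upper triangular iff all leading
principal minors of `g` are nonzero. -/
theorem stmt7 (n : ℕ) (g : Matrix (Fin n) (Fin n) ℂ) :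
    (∃ L U : Matrix (Fin n) (Fin n) ℂ, IsUnit L.det ∧ IsUnit U.det ∧
        (∀ i j : Fin n, i < j → L i j = 0) ∧ (∀ i j : Fin n, j < i → U i j = 0) ∧
        g = L * U) ↔
      ∀ (k : ℕ) (hk : k ≤ n),
        (g.submatrix (Fin.castLE hk) (Fin.castLE hk)).det ≠ 0 := by
  constructor
  · rintro ⟨L, U, hLdet, hUdet, hLtri, hUtri, rfl⟩ k hk
    rw [submatrix_mul_tri hk L U hLtri, Matrix.det_mul]
    have hLblock : L.BlockTriangular OrderDual.toDual := fun i j h => hLtri i j h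
    have hUblock : U.BlockTriangular id := fun i j h => hUtri i j h
    have hLprod := Matrix.det_of_lowerTriangular L hLblock
    have hUprod := Matrix.det_of_upperTriangular hUblock
    have hLdiag : ∀ i : Fin n, L i i ≠ 0 := by
      have := hLdet.ne_zero
      rw [hLprod] at this
      exact fun i => Finset.prod_ne_zero_iff.mp this i (Finset.mem_univ i)
    have hUdiag : ∀ i : Fin n, U i i ≠ 0 := by
      have := hUdet.ne_zero
      rw [hUprod] at this
      exact fun i => Finset.prod_ne_zero_iff.mp this i (Finset.mem_univ i)
    have hLsub : (L.submatrix (Fin.castLE hk) (Fin.castLE hk)).BlockTriangular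
        OrderDual.toDual := fun i j h => hLtri _ _ h
    have hUsub : (U.submatrix (Fin.castLE hk) (Fin.castLE hk)).BlockTriangular id :=
      fun i j h => hUtri _ _ h
    rw [Matrix.det_of_lowerTriangular _ hLsub, Matrix.det_of_upperTriangular hUsub]
    refine mul_ne_zero (Finset.prod_ne_zero_iff.mpr fun i _ => hLdiag _)
      (Finset.prod_ne_zero_iff.mpr fun i _ => hUdiag _)
  · exact lu_exists n g
end

section
/- Let g = [[0,-1,0],[1,0,0],[0,1,1]] ∈ SL_3(ℝ) and let h = g·u·g^{-1}, where u is an upper triangular 3×3 matrix with det(u) = 1. Suppose that every minor of h (of every size) is nonnegative. Then h has a repeated eigenvalue; in fact, h has the form [[d,0,0],[*,a,*],[0,0,d]] for some scalars, so d is an eigenvalue of multiplicity at least 2. -/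
/-- The `m × m` minor of an `n × n` matrix `M` in rows `I` and columns `J`. -/
noncomputable def sqMinor {F : Type*} [CommRing F] {n m : ℕ} (M : Matrix (Fin n) (Fin n) F)
    (I J : Finset (Fin n)) (hI : I.card = m) (hJ : J.card = m) : F :=
  (M.submatrix (fun a => ((I.orderIsoOfFin hI a : Fin n)))
    (fun a => ((J.orderIsoOfFin hJ a : Fin n)))).det

lemma iso_single {n : ℕ} (i : Fin n) (h : ({i} : Finset (Fin n)).card = 1) (k : Fin 1) :
    (({i} : Finset (Fin n)).orderIsoOfFin h k : Fin n) = i := by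
  have := Finset.orderEmbOfFin_mem {i} h k
  rw [Finset.mem_singleton] at this
  rw [Finset.coe_orderIsoOfFin_apply]; exact this

lemma iso_pair {n : ℕ} (i j : Fin n) (hij : i < j) (h : ({i, j} : Finset (Fin n)).card = 2) :
    (({i, j} : Finset (Fin n)).orderIsoOfFin h 0 : Fin n) = i ∧
    (({i, j} : Finset (Fin n)).orderIsoOfFin h 1 : Fin n) = j := by
  have m0 := Finset.orderEmbOfFin_mem {i, j} h 0
  have m1 := Finset.orderEmbOfFin_mem {i, j} h 1
  simp only [Finset.mem_insert, Finset.mem_singleton] at m0 m1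
  have hlt : ({i, j} : Finset (Fin n)).orderEmbOfFin h 0 <
      ({i, j} : Finset (Fin n)).orderEmbOfFin h 1 :=
    (Finset.orderEmbOfFin {i, j} h).strictMono (by decide)
  rw [Finset.coe_orderIsoOfFin_apply, Finset.coe_orderIsoOfFin_apply]
  rcases m0 with h0 | h0 <;> rcases m1 with h1 | h1 <;>
    first
    | exact ⟨h0, h1⟩
    | (exfalso; rw [h0, h1] at hlt; exact absurd hlt (by simp [hij.le, lt_irrefl, not_lt]))

lemma minor1 (h : Matrix (Fin 3) (Fin 3) ℝ)
    (hpos : ∀ (m : ℕ) (I J : Finset (Fin 3)) (hI : I.card = m) (hJ : J.card = m),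
      0 ≤ sqMinor h I J hI hJ) (i j : Fin 3) : 0 ≤ h i j := by
  have := hpos 1 {i} {j} (by simp) (by simp)
  rwa [sqMinor, Matrix.det_fin_one, Matrix.submatrix_apply, iso_single, iso_single] at this

lemma minor2 (h : Matrix (Fin 3) (Fin 3) ℝ)
    (hpos : ∀ (m : ℕ) (I J : Finset (Fin 3)) (hI : I.card = m) (hJ : J.card = m),
      0 ≤ sqMinor h I J hI hJ) (i₁ i₂ j₁ j₂ : Fin 3) (hi : i₁ < i₂) (hj : j₁ < j₂) :
    0 ≤ h i₁ j₁ * h i₂ j₂ - h i₁ j₂ * h i₂ j₁ := by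
  have hci : ({i₁, i₂} : Finset (Fin 3)).card = 2 := by
    rw [Finset.card_insert_of_notMem (by simp [hi.ne]), Finset.card_singleton]
  have hcj : ({j₁, j₂} : Finset (Fin 3)).card = 2 := by
    rw [Finset.card_insert_of_notMem (by simp [hj.ne]), Finset.card_singleton]
  have := hpos 2 {i₁, i₂} {j₁, j₂} hci hcj
  rw [sqMinor, Matrix.det_fin_two] at this
  simp only [Matrix.submatrix_apply, (iso_pair _ _ hi hci).1, (iso_pair _ _ hi hci).2,
    (iso_pair _ _ hj hcj).1, (iso_pair _ _ hj hcj).2] at this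
  exact this

/-- Let `g = [[0,-1,0],[1,0,0],[0,1,1]]` and `h = g · u · g⁻¹` with `u`
upper triangular of determinant `1`. If every minor of `h` is nonnegative, then `h`
has the form `[[d,0,0],[*,*,*],[0,0,d]]`, so `d` is a repeated eigenvalue. -/
theorem stmt9 (u h : Matrix (Fin 3) (Fin 3) ℝ)
    (hu : ∀ i j : Fin 3, j < i → u i j = 0) (hdet : u.det = 1)
    (hh : h = !![0,-1,0;1,0,0;0,1,1] * u * (!![0,-1,0;1,0,0;0,1,1] : Matrix (Fin 3) (Fin 3) ℝ)⁻¹)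
    (hpos : ∀ (m : ℕ) (I J : Finset (Fin 3)) (hI : I.card = m) (hJ : J.card = m),
      0 ≤ sqMinor h I J hI hJ) :
    ∃ d p q r : ℝ, h = !![d, 0, 0; p, q, r; 0, 0, d] := by
  have h10 : u 1 0 = 0 := hu 1 0 (by decide)
  have h20 : u 2 0 = 0 := hu 2 0 (by decide)
  have h21 : u 2 1 = 0 := hu 2 1 (by decide)
  have hginv : (!![0,-1,0;1,0,0;0,1,1] : Matrix (Fin 3) (Fin 3) ℝ)⁻¹ = !![0,1,0;-1,0,0;1,0,1] := by
    apply Matrix.inv_eq_right_inv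
    ext i j
    fin_cases i <;> fin_cases j <;>
      simp [Matrix.mul_apply, Fin.sum_univ_three, Matrix.one_apply, Matrix.vecMul, Matrix.vecHead,
        Matrix.vecTail, dotProduct]
  have hmat : h = !![u 1 1 - u 1 2, 0, -u 1 2;
       u 0 2 - u 0 1, u 0 0, u 0 2;
       u 2 2 + u 1 2 - u 1 1, 0, u 1 2 + u 2 2] := by
    rw [hh, hginv]
    ext i j
    fin_cases i <;> fin_cases j <;>
      simp [Matrix.mul_apply, Fin.sum_univ_three, h10, h20, h21, Matrix.vecMul, Matrix.vecHead,
        Matrix.vecTail, dotProduct] <;> ring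
  -- determinant of u
  have hdet' : u 0 0 * u 1 1 * u 2 2 = 1 := by
    rw [Matrix.det_fin_three, h10, h20, h21] at hdet
    linarith [hdet]
  -- entry values of h
  have e00 : h 0 0 = u 1 1 - u 1 2 := by rw [hmat]; rfl
  have e02 : h 0 2 = -u 1 2 := by rw [hmat]; rfl
  have e11 : h 1 1 = u 0 0 := by rw [hmat]; rfl
  have e01 : h 0 1 = 0 := by rw [hmat]; rfl
  have e12 : h 1 2 = u 0 2 := by rw [hmat]; rfl
  have e20 : h 2 0 = u 2 2 + u 1 2 - u 1 1 := by rw [hmat]; rfl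
  have e21 : h 2 1 = 0 := by rw [hmat]; rfl
  -- inequalities
  have ha : 0 ≤ u 0 0 := by have := minor1 h hpos 1 1; rwa [e11] at this
  have he : u 1 2 ≤ 0 := by have := minor1 h hpos 0 2; rw [e02] at this; linarith
  have h20' : 0 ≤ u 2 2 + u 1 2 - u 1 1 := by have := minor1 h hpos 2 0; rwa [e20] at this
  have hea : 0 ≤ u 1 2 * u 0 0 := by
    have := minor2 h hpos 0 1 1 2 (by decide) (by decide)
    rw [e01, e02, e11, e12] at this
    nlinarith [this]
  have hfa : 0 ≤ -(u 0 0 * (u 2 2 + u 1 2 - u 1 1)) := by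
    have := minor2 h hpos 1 2 0 1 (by decide) (by decide)
    rw [e20, e21] at this
    nlinarith [this]
  have hapos : 0 < u 0 0 := by
    rcases ha.lt_or_eq with h' | h'
    · exact h'
    · exfalso; rw [← h'] at hdet'; norm_num at hdet'
  have he0 : u 1 2 = 0 := le_antisymm he (by nlinarith)
  have hx : u 2 2 + u 1 2 - u 1 1 = 0 := le_antisymm (by nlinarith) h20'
  have hfd : u 2 2 = u 1 1 := by linarith
  refine ⟨u 1 1, u 0 2 - u 0 1, u 0 0, u 0 2, ?_⟩
  rw [hmat, he0, hfd]
  norm_num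
end

section
/- With g = [[0,-1,0],[1,0,0],[0,1,1]] and h = g·u·g^{-1} where u = [[a,b,c],[0,d,e],[0,0,f]] with adf = 1: if all 1×1 and 2×2 minors of h are nonnegative and a is a positive real, then e = 0 and f = d - e, i.e., h = [[d,0,0],[c-b,a,c],[0,0,d]]. -/
lemma minorval {F : Type*} [CommRing F] (M : Matrix (Fin 3) (Fin 3) F)
    (I J : Finset (Fin 3)) (hI : I.card = 2) (hJ : J.card = 2)
    (i0 i1 j0 j1 : Fin 3)
    (hi0 : I.min' (by rw [← Finset.card_pos, hI]; norm_num) = i0)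
    (hi1 : I.max' (by rw [← Finset.card_pos, hI]; norm_num) = i1)
    (hj0 : J.min' (by rw [← Finset.card_pos, hJ]; norm_num) = j0)
    (hj1 : J.max' (by rw [← Finset.card_pos, hJ]; norm_num) = j1) :
    sqMinor M I J hI hJ = M i0 j0 * M i1 j1 - M i0 j1 * M i1 j0 := by
  have e0 : I.orderEmbOfFin hI 0 = i0 := by
    rw [← hi0]
    exact Finset.orderEmbOfFin_zero hI (by norm_num)
  have e1 : I.orderEmbOfFin hI 1 = i1 := by
    rw [← hi1]
    have : (1 : Fin 2) = ⟨2 - 1, by omega⟩ := rfl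
    rw [this]
    exact Finset.orderEmbOfFin_last hI (by norm_num)
  have f0 : J.orderEmbOfFin hJ 0 = j0 := by
    rw [← hj0]
    exact Finset.orderEmbOfFin_zero hJ (by norm_num)
  have f1 : J.orderEmbOfFin hJ 1 = j1 := by
    rw [← hj1]
    have : (1 : Fin 2) = ⟨2 - 1, by omega⟩ := rfl
    rw [this]
    exact Finset.orderEmbOfFin_last hJ (by norm_num)
  simp [sqMinor, Matrix.det_fin_two, e0, e1, f0, f1]

/-- With `g = [[0,-1,0],[1,0,0],[0,1,1]]`, `u = [[a,b,c],[0,d,e],[0,0,f]]`,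
`adf = 1`, and `h = g·u·g⁻¹`: if all entries and all `2×2` minors of `h` are nonnegative
and `a > 0`, then `e = 0`, `f = d - e`, and `h = [[d,0,0],[c-b,a,c],[0,0,d]]`. -/
theorem stmt10 (a b c d e f : ℝ) (hadf : a * d * f = 1) (ha : 0 < a)
    (h : Matrix (Fin 3) (Fin 3) ℝ)
    (hh : h = !![0,-1,0;1,0,0;0,1,1] * !![a,b,c;0,d,e;0,0,f] *
      (!![0,-1,0;1,0,0;0,1,1] : Matrix (Fin 3) (Fin 3) ℝ)⁻¹)
    (h1 : ∀ i j : Fin 3, 0 ≤ h i j)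
    (h2 : ∀ (I J : Finset (Fin 3)) (hI : I.card = 2) (hJ : J.card = 2),
      0 ≤ sqMinor h I J hI hJ) :
    e = 0 ∧ f = d - e ∧ h = !![d, 0, 0; c - b, a, c; 0, 0, d] := by
  have hinv : (!![0,-1,0;1,0,0;0,1,1] : Matrix (Fin 3) (Fin 3) ℝ)⁻¹ =
      !![0,1,0;-1,0,0;1,0,1] := by
    apply Matrix.inv_eq_right_inv
    norm_num [Matrix.mul_fin_three]
    exact Matrix.one_fin_three.symm
  rw [hinv] at hh
  have hexp : h = !![d-e, 0, -e; c-b, a, c; e+f-d, 0, e+f] := by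
    rw [hh]
    ext i j
    fin_cases i <;> fin_cases j <;> simp [Matrix.mul_fin_three] <;> ring
  -- entry facts
  have he02 : (0:ℝ) ≤ -e := by have := h1 0 2; rw [hexp] at this; simpa using this
  have he20 : (0:ℝ) ≤ e + f - d := by have := h1 2 0; rw [hexp] at this; simpa using this
  -- minor rows {1,2}, cols {0,1}: (c-b)*0 - a*(e+f-d)
  have m1 := h2 {1,2} {0,1} (by decide) (by decide)
  rw [minorval h {1,2} {0,1} (by decide) (by decide) 1 2 0 1
    (by decide) (by decide) (by decide) (by decide)] at m1
  rw [hexp] at m1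
  simp [Matrix.cons_val_zero, Matrix.cons_val_one] at m1
  -- minor rows {0,1}, cols {1,2}: 0*c - (-e)*a
  have m2 := h2 {0,1} {1,2} (by decide) (by decide)
  rw [minorval h {0,1} {1,2} (by decide) (by decide) 0 1 1 2
    (by decide) (by decide) (by decide) (by decide)] at m2
  rw [hexp] at m2
  simp [Matrix.cons_val_zero, Matrix.cons_val_one] at m2
  have heq : e = 0 := by nlinarith
  have hfd : f = d - e := by nlinarith
  refine ⟨heq, hfd, ?_⟩
  rw [hexp, hfd, heq]
  norm_num
end

section
/- Let n ≥ 1 and consider the symmetric group S_n with the (strong) Bruhat order ≤. For permutations v ≤ w and a permutation x, the following are equivalent: (1) x ∈ [v,w] (i.e., v ≤ x ≤ w); (2) for every k ∈ {1,…,n-1} there exists y ∈ [v,w] with y({1,…,k}) = x({1,…,k}). -/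
/-- The (strong) Bruhat order on the symmetric group `S_n`, via the standard
dominance criterion: `v ≤ w` iff for all `i, k`,
`#{j ≤ k : v(j) ≥ i} ≤ #{j ≤ k : w(j) ≥ i}`. -/
def bruhatLE {n : ℕ} (v w : Equiv.Perm (Fin n)) : Prop :=
  ∀ i k : Fin n,
    (Finset.univ.filter fun j => j ≤ k ∧ i ≤ v j).card ≤
    (Finset.univ.filter fun j => j ≤ k ∧ i ≤ w j).card

/-!
Each dominance count `#{j ≤ k : z(j) ≥ i}` only sees the set `z({1,…,k+1})`: it is the number of
elements `≥ i` in that set. For `k+1 ≤ n-1` the hypothesis supplies `y ∈ [v,w]` with the same set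
as `x`, so `x` inherits both inequalities from `y`; for `k+1 = n` the set is everything and the
counts of `v`, `x`, `w` coincide.
-/

namespace Bruhat

open Finset

variable {n : ℕ}

/-- Positions are 0-indexed: this is the paper's `z({1,…,k})`. -/
def initialImage (z : Equiv.Perm (Fin n)) (k : ℕ) : Finset (Fin n) :=
  (univ.filter fun j : Fin n => (j : ℕ) < k).image z

lemma card_filter_le_and_le_apply (z : Equiv.Perm (Fin n)) (i k : Fin n) :
    (univ.filter fun j => j ≤ k ∧ i ≤ z j).card =
      ((initialImage z (k + 1)).filter fun m => i ≤ m).card := by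
  rw [initialImage, filter_image, card_image_of_injective _ z.injective, filter_filter]
  simp only [Fin.le_def, Nat.lt_succ_iff]

lemma initialImage_eq_univ (z : Equiv.Perm (Fin n)) {k : ℕ} (hk : n ≤ k) :
    initialImage z k = univ := by
  have hall : (univ.filter fun j : Fin n => (j : ℕ) < k) = univ :=
    filter_true_of_mem fun j _ => j.isLt.trans_le hk
  rw [initialImage, hall, image_univ_equiv]

end Bruhat

theorem stmt11_general (n : ℕ) (v w x : Equiv.Perm (Fin n)) :
    (bruhatLE v x ∧ bruhatLE x w) ↔
      ∀ k : ℕ, 1 ≤ k → k ≤ n - 1 →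
        ∃ y : Equiv.Perm (Fin n), bruhatLE v y ∧ bruhatLE y w ∧
          (Finset.univ.filter fun j : Fin n => (j : ℕ) < k).image y =
          (Finset.univ.filter fun j : Fin n => (j : ℕ) < k).image x := by
  refine ⟨fun ⟨hvx, hxw⟩ _ _ _ => ⟨x, hvx, hxw, rfl⟩, fun h => ?_⟩
  suffices key : ∀ i k : Fin n,
      (Finset.univ.filter fun j => j ≤ k ∧ i ≤ v j).card ≤
          (Finset.univ.filter fun j => j ≤ k ∧ i ≤ x j).card ∧
        (Finset.univ.filter fun j => j ≤ k ∧ i ≤ x j).card ≤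
          (Finset.univ.filter fun j => j ≤ k ∧ i ≤ w j).card from
    ⟨fun i k => (key i k).1, fun i k => (key i k).2⟩
  intro i k
  simp only [Bruhat.card_filter_le_and_le_apply]
  by_cases hk : (k : ℕ) + 1 ≤ n - 1
  · obtain ⟨y, hvy, hyw, hyx⟩ := h (k + 1) (by omega) hk
    have hxy : Bruhat.initialImage x (k + 1) = Bruhat.initialImage y (k + 1) := hyx.symm
    rw [hxy]
    simpa only [Bruhat.card_filter_le_and_le_apply] using And.intro (hvy i k) (hyw i k)
  · have hn : n ≤ (k : ℕ) + 1 := by omega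
    simp only [Bruhat.initialImage_eq_univ _ hn, le_refl, and_self]

/-- For `v ≤ w` in Bruhat order on `S_n` and any permutation `x`:
`x ∈ [v,w]` iff for every `k ∈ {1,…,n-1}` there is `y ∈ [v,w]` with
`y({1,…,k}) = x({1,…,k})`. -/
theorem stmt11 (n : ℕ) (hn : 1 ≤ n) (v w x : Equiv.Perm (Fin n)) (hvw : bruhatLE v w) :
    (bruhatLE v x ∧ bruhatLE x w) ↔
      ∀ k : ℕ, 1 ≤ k → k ≤ n - 1 →
        ∃ y : Equiv.Perm (Fin n), bruhatLE v y ∧ bruhatLE y w ∧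
          (Finset.univ.filter fun j : Fin n => (j : ℕ) < k).image y =
          (Finset.univ.filter fun j : Fin n => (j : ℕ) < k).image x :=
  stmt11_general n v w x
end

section
/- In the symmetric group S_4 with Bruhat order, the intervals [1342, 2341] = {1342, 2341} and [3124, 4123] = {3124, 4123} fail the opposition criterion at k = 1: there do not exist x ∈ {1342, 2341} and x' ∈ {3124, 4123} with x(1) = x'(1). Nevertheless, the point (2,3,2,3) ∈ ℝ^4 lies in the convex hull of {(x^{-1}(1),…,x^{-1}(4)) : x ∈ {1342, 2341}} and also in the convex hull of {(x^{-1}(1),…,x^{-1}(4)) : x ∈ {3124, 4123}}. -/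
/-- The permutation `1342` of `S_4` in one-line notation (`0`-indexed). -/
noncomputable def p1342 : Equiv.Perm (Fin 4) := Equiv.ofBijective ![0, 2, 3, 1] (by decide)
/-- The permutation `2341`. -/
noncomputable def p2341 : Equiv.Perm (Fin 4) := Equiv.ofBijective ![1, 2, 3, 0] (by decide)
/-- The permutation `3124`. -/
noncomputable def p3124 : Equiv.Perm (Fin 4) := Equiv.ofBijective ![2, 0, 1, 3] (by decide)
/-- The permutation `4123`. -/
noncomputable def p4123 : Equiv.Perm (Fin 4) := Equiv.ofBijective ![3, 0, 1, 2] (by decide)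

/-- The point `(x⁻¹(1), …, x⁻¹(4)) ∈ ℝ^4` associated to a permutation `x ∈ S_4`
(with values labeled `1, …, 4`). -/
noncomputable def invVec (x : Equiv.Perm (Fin 4)) : Fin 4 → ℝ :=
  fun i => ((x⁻¹ i : Fin 4) : ℕ) + 1

lemma inv1342 : invVec p1342 = ![1, 4, 2, 3] := by
  funext i
  have h : ∀ j, p1342⁻¹ j = (![0, 3, 1, 2] : Fin 4 → Fin 4) j := by
    intro j
    rw [Equiv.Perm.inv_eq_iff_eq]
    fin_cases j <;> simp [p1342, Equiv.ofBijective_apply] <;> decide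
  simp only [invVec, h]
  fin_cases i <;> norm_num [show ((3:Fin 4):ℕ) = 3 from rfl]

lemma inv2341 : invVec p2341 = ![4, 1, 2, 3] := by
  funext i
  have h : ∀ j, p2341⁻¹ j = (![3, 0, 1, 2] : Fin 4 → Fin 4) j := by
    intro j
    rw [Equiv.Perm.inv_eq_iff_eq]
    fin_cases j <;> simp [p2341, Equiv.ofBijective_apply] <;> decide
  simp only [invVec, h]
  fin_cases i <;> norm_num [show ((3:Fin 4):ℕ) = 3 from rfl]

lemma inv3124 : invVec p3124 = ![2, 3, 1, 4] := by
  funext i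
  have h : ∀ j, p3124⁻¹ j = (![1, 2, 0, 3] : Fin 4 → Fin 4) j := by
    intro j
    rw [Equiv.Perm.inv_eq_iff_eq]
    fin_cases j <;> simp [p3124, Equiv.ofBijective_apply] <;> decide
  simp only [invVec, h]
  fin_cases i <;> norm_num [show ((3:Fin 4):ℕ) = 3 from rfl]

lemma inv4123 : invVec p4123 = ![2, 3, 4, 1] := by
  funext i
  have h : ∀ j, p4123⁻¹ j = (![1, 2, 3, 0] : Fin 4 → Fin 4) j := by
    intro j
    rw [Equiv.Perm.inv_eq_iff_eq]
    fin_cases j <;> simp [p4123, Equiv.ofBijective_apply] <;> decide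
  simp only [invVec, h]
  fin_cases i <;> norm_num [show ((3:Fin 4):ℕ) = 3 from rfl]

lemma seg_mem {a b : Fin 4 → ℝ} {s : Set (Fin 4 → ℝ)} (ha : a ∈ s) (hb : b ∈ s)
    (h : (2/3 : ℝ) • a + (1/3 : ℝ) • b = (![2, 3, 2, 3] : Fin 4 → ℝ)) :
    (![2, 3, 2, 3] : Fin 4 → ℝ) ∈ convexHull ℝ s := by
  exact segment_subset_convexHull ha hb ⟨2/3, 1/3, by norm_num, by norm_num, by norm_num, h⟩

/-- The intervals `{1342, 2341}` and `{3124, 4123}` of `S_4` fail the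
opposition criterion at `k = 1` (no `x, x'` with `x(1) = x'(1)`), yet the point
`(2,3,2,3)` lies in both of their Bruhat interval polytopes. -/
theorem stmt13 :
    (∀ x ∈ ({p1342, p2341} : Set (Equiv.Perm (Fin 4))),
      ∀ x' ∈ ({p3124, p4123} : Set (Equiv.Perm (Fin 4))), x 0 ≠ x' 0) ∧
    (![2, 3, 2, 3] : Fin 4 → ℝ) ∈ convexHull ℝ (invVec '' {p1342, p2341}) ∧
    (![2, 3, 2, 3] : Fin 4 → ℝ) ∈ convexHull ℝ (invVec '' {p3124, p4123}) := by
  refine ⟨?_, ?_, ?_⟩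
  · rintro x (rfl | rfl) x' (rfl | rfl) <;>
      simp [p1342, p2341, p3124, p4123, Equiv.ofBijective_apply] <;> decide
  · refine seg_mem (a := invVec p1342) (b := invVec p2341)
      ⟨p1342, Or.inl rfl, rfl⟩ ⟨p2341, Or.inr rfl, rfl⟩ ?_
    rw [inv1342, inv2341]; funext i; fin_cases i <;> norm_num
  · refine seg_mem (a := invVec p3124) (b := invVec p4123)
      ⟨p3124, Or.inl rfl, rfl⟩ ⟨p4123, Or.inr rfl, rfl⟩ ?_
    rw [inv3124, inv4123]; funext i; fin_cases i <;> norm_num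
end
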